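/- arXiv:1611.03117 — 3 statements merged into one kernel-verified Lean document; each statement's English description precedes it below -/
import Mathlib

section
/- If the commutator ideal [g,g] of a 2n-dimensional real Lie algebra g with almost complex structure J has dimension less than n, then the subspace h = [g,g] + J[g,g] is an IJ-subalgebra of g of dimension at most 2n - 2. -/
theorem commutator_IJ_subalgebra (n : ℕ) (L : Type) [LieRing L] [LieAlgebra ℝ L]
    [FiniteDimensional ℝ L] (hdim : Module.finrank ℝ L = 2 * n)
    (J : L →ₗ[ℝ] L) (hJ : ∀ x, J (J x) = -x)
    (D : Submodule ℝ L) (hD : D = Submodule.span ℝ {z : L | ∃ X Y : L, z = ⁅X, Y⁆})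
    (hcomm : Module.finrank ℝ D < n)
    (h : Submodule ℝ L) (hh : h = D ⊔ D.map J) :
    (∀ x ∈ h, ∀ y ∈ h, ⁅x, y⁆ ∈ h) ∧
    (∀ x ∈ h, J x ∈ h) ∧
    (∀ X Y : L, ⁅X, Y⁆ + J ⁅J X, Y⁆ + J ⁅X, J Y⁆ - ⁅J X, J Y⁆ ∈ h) ∧
    (∀ x ∈ h, ∀ Y : L, ⁅x, Y⁆ + J ⁅x, J Y⁆ ∈ h) ∧
    Module.finrank ℝ h ≤ 2 * n - 2 := by
  have hbr : ∀ X Y : L, ⁅X, Y⁆ ∈ D := by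
    intro X Y
    rw [hD]
    exact Submodule.subset_span ⟨X, Y, rfl⟩
  have hDh : D ≤ h := by rw [hh]; exact le_sup_left
  have hJDh : D.map J ≤ h := by rw [hh]; exact le_sup_right
  have hJbr : ∀ X Y : L, J ⁅X, Y⁆ ∈ h := fun X Y =>
    hJDh ⟨⁅X, Y⁆, hbr X Y, rfl⟩
  have hJmem : ∀ x ∈ h, J x ∈ h := by
    intro x hx
    rw [hh] at hx
    rcases Submodule.mem_sup.1 hx with ⟨a, ha, b, hb, rfl⟩
    rcases hb with ⟨c, hc, rfl⟩
    rw [map_add, hJ c]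
    exact add_mem (hJDh ⟨a, ha, rfl⟩) (hDh (neg_mem hc))
  refine ⟨fun x _ y _ => hDh (hbr x y), hJmem, ?_, ?_, ?_⟩
  · intro X Y
    exact sub_mem (add_mem (add_mem (hDh (hbr X Y)) (hJbr _ _)) (hJbr _ _))
      (hDh (hbr _ _))
  · intro x _ Y
    exact add_mem (hDh (hbr _ _)) (hJbr _ _)
  · rw [hh]
    have h1 : Module.finrank ℝ (D ⊔ D.map J : Submodule ℝ L) ≤
        Module.finrank ℝ D + Module.finrank ℝ (D.map J) :=
      Submodule.finrank_add_le_finrank_add_finrank D (D.map J)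
    have h2 : Module.finrank ℝ (D.map J) ≤ Module.finrank ℝ D :=
      Submodule.finrank_map_le J D
    omega
end

section
/- Let J be an almost complex structure on h_{2n+2} such that J maps Span{X¹,…,X^{n+1}} into Span{X^{n+2},…,X^{2n+2}} and vice versa. Then the Nijenhuis tensor satisfies N(Xⁱ, X^{n+1}) = X^{n+1+i} for 1 ≤ i ≤ n. -/
/-! On `h_{2n+2}` the span `V₂` of `X (n+1), …, X (2n+1)` is central, since every nonzero bracket
of basis vectors involves only `X 0, …, X n` as inputs. As `J` maps `X i` and `X n` into `V₂`, the
three terms of the Nijenhuis tensor that contain `J` vanish, leaving `N(X i, X n) = ⁅X i, X n⁆`. -/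

namespace LieAlgebra

variable {R L : Type*} [CommRing R] [LieRing L] [LieAlgebra R L]

def nijenhuis (J : L →ₗ[R] L) (x y : L) : L :=
  ⁅x, y⁆ + J ⁅J x, y⁆ + J ⁅x, J y⁆ - ⁅J x, J y⁆

lemma lie_eq_zero_of_mem_center_left {z : L} (hz : z ∈ center R L) (x : L) : ⁅z, x⁆ = 0 := by
  rw [← lie_skew, (LieModule.mem_maxTrivSubmodule R L L z).mp hz x, neg_zero]

lemma nijenhuis_eq_lie_of_mem_center {J : L →ₗ[R] L} {x y : L}
    (hx : J x ∈ center R L) (hy : J y ∈ center R L) : nijenhuis J x y = ⁅x, y⁆ := by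
  rw [nijenhuis, lie_eq_zero_of_mem_center_left hx, lie_eq_zero_of_mem_center_left hx,
    (LieModule.mem_maxTrivSubmodule R L L _).mp hy x]
  simp only [map_zero, add_zero, sub_zero]

lemma mem_center_of_forall_basis_lie_eq_zero {ι : Type*} (b : Module.Basis ι R L) {z : L}
    (h : ∀ i, ⁅b i, z⁆ = 0) : z ∈ center R L := by
  have had : ad R L z = 0 := b.ext fun i => by rw [ad_apply, ← lie_skew, h i, neg_zero]; rfl
  exact (LieModule.mem_maxTrivSubmodule R L L z).mpr fun x => by
    rw [← lie_skew, ← ad_apply R, had, LinearMap.zero_apply, neg_zero]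

lemma span_le_center_of_forall_basis_lie_eq_zero {ι : Type*} (b : Module.Basis ι R L)
    {s : Set L} (h : ∀ z ∈ s, ∀ i, ⁅b i, z⁆ = 0) :
    Submodule.span R s ≤ (center R L).toSubmodule :=
  Submodule.span_le.mpr fun z hz => mem_center_of_forall_basis_lie_eq_zero b (h z hz)

end LieAlgebra

open LieAlgebra in
/-- For an almost complex structure `J` on `h_{2n+2}` interchanging
`V₁ = Span{X 0,…,X n}` and `V₂ = Span{X (n+1),…,X (2n+1)}`, the Nijenhuis tensor
satisfies `N(X (i), X n) = X (n+1+i)` for `i < n`. -/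
theorem nijenhuis_on_basis (n : ℕ) (L : Type) [LieRing L] [LieAlgebra ℝ L]
    (X : Module.Basis (Fin (2 * n + 2)) ℝ L)
    (hbr : ∀ i j : Fin (2 * n + 2), ⁅X i, X j⁆ =
      if hij : i.val < n ∧ j.val = n then X ⟨n + 1 + i.val, by omega⟩
      else if hji : j.val < n ∧ i.val = n then -X ⟨n + 1 + j.val, by omega⟩
      else 0)
    (J : L →ₗ[ℝ] L)
    (hJ12 : ∀ i : Fin (2 * n + 2), i.val ≤ n →
      J (X i) ∈ Submodule.span ℝ {z : L | ∃ j : Fin (2 * n + 2), n + 1 ≤ j.val ∧ z = X j}) :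
    ∀ i : Fin (2 * n + 2), (hi : i.val < n) →
      ⁅X i, X ⟨n, by omega⟩⁆ + J ⁅J (X i), X ⟨n, by omega⟩⁆
        + J ⁅X i, J (X ⟨n, by omega⟩)⁆ - ⁅J (X i), J (X ⟨n, by omega⟩)⁆
      = X ⟨n + 1 + i.val, by omega⟩ := by
  intro i hi
  have hV₂ : Submodule.span ℝ {z : L | ∃ j : Fin (2 * n + 2), n + 1 ≤ j.val ∧ z = X j} ≤
      (center ℝ L).toSubmodule := by
    refine span_le_center_of_forall_basis_lie_eq_zero X ?_
    rintro _ ⟨j, hj, rfl⟩ k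
    rw [hbr, dif_neg (by omega), dif_neg (by omega)]
  change nijenhuis J (X i) (X ⟨n, by omega⟩) = _
  rw [nijenhuis_eq_lie_of_mem_center (hV₂ (hJ12 i hi.le)) (hV₂ (hJ12 _ le_rfl)), hbr,
    dif_pos ⟨hi, rfl⟩]
end

section
/- Every almost complex structure J on the solvable Lie algebra g with basis e₁,…,e_{2n} and brackets [eᵢ, e_{2n}] = eᵢ (1 ≤ i ≤ 2n-1) has vanishing Nijenhuis tensor: N(X,Y) = 0 for all X, Y ∈ g. -/
/-!
With `φ` the coordinate functional of the last basis vector, the bracket is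
`⁅x, y⁆ = φ y • x - φ x • y`, as both sides are bilinear and agree on the basis. For a bracket
of this form the four terms of the Nijenhuis tensor cancel for every `J` with `J ∘ J = -1`.
-/

section

variable {R L : Type*} [CommRing R] [LieRing L] [LieAlgebra R L]

theorem lie_eq_smul_sub_smul_of_basis {ι : Type*} (e : Module.Basis ι R L) (φ : L →ₗ[R] R)
    (h : ∀ i j, ⁅e i, e j⁆ = φ (e j) • e i - φ (e i) • e j) (x y : L) :
    ⁅x, y⁆ = φ y • x - φ x • y := by
  let B : L →ₗ[R] L →ₗ[R] L := LinearMap.mk₂ R (fun x y => φ y • x - φ x • y)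
    (by intros; simp only [map_add]; module) (by intros; simp only [map_smul, smul_eq_mul]; module)
    (by intros; simp only [map_add]; module) (by intros; simp only [map_smul, smul_eq_mul]; module)
  have hB : (LieModule.toEnd R L L : L →ₗ[R] L →ₗ[R] L) = B := LinearMap.ext_basis e e h
  exact LinearMap.congr_fun₂ hB x y

theorem lie_basis_eq_coord_smul_sub {N : ℕ} (hN : 0 < N) (e : Module.Basis (Fin N) R L)
    (hbr : ∀ i j : Fin N, ⁅e i, e j⁆ =
      if i.val < N - 1 ∧ j.val = N - 1 then e i
      else if j.val < N - 1 ∧ i.val = N - 1 then -e j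
      else 0) (i j : Fin N) :
    ⁅e i, e j⁆ = e.coord ⟨N - 1, by omega⟩ (e j) • e i - e.coord ⟨N - 1, by omega⟩ (e i) • e j := by
  by_cases hij : i = j
  · subst hij
    simp
  rw [Fin.ext_iff] at hij
  have := i.isLt
  have := j.isLt
  simp only [hbr, Module.Basis.coord_apply, Module.Basis.repr_self, Finsupp.single_apply, Fin.ext_iff]
  split_ifs <;> first | omega | simp

theorem nijenhuis_eq_zero_of_lie_eq_smul_sub_smul (φ : L →ₗ[R] R)
    (hφ : ∀ x y : L, ⁅x, y⁆ = φ y • x - φ x • y) (J : L →ₗ[R] L) (hJ : ∀ x, J (J x) = -x)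
    (x y : L) : ⁅x, y⁆ + J ⁅J x, y⁆ + J ⁅x, J y⁆ - ⁅J x, J y⁆ = 0 := by
  simp only [hφ, map_sub, map_smul, hJ]
  module

end

/-- Every almost complex structure on the solvable Lie algebra with basis
`e 0, …, e (2n-1)` and only nonzero brackets `⁅e i, e (2n-1)⁆ = e i` (`i < 2n-1`)
has vanishing Nijenhuis tensor. -/
theorem solvable_integrable (n : ℕ) (hn : 1 ≤ n) (L : Type) [LieRing L] [LieAlgebra ℝ L]
    (e : Module.Basis (Fin (2 * n)) ℝ L)
    (hbr : ∀ i j : Fin (2 * n), ⁅e i, e j⁆ =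
      if hij : i.val < 2 * n - 1 ∧ j.val = 2 * n - 1 then e i
      else if hji : j.val < 2 * n - 1 ∧ i.val = 2 * n - 1 then -e j
      else 0)
    (J : L →ₗ[ℝ] L) (hJ : ∀ x, J (J x) = -x) :
    ∀ x y : L, ⁅x, y⁆ + J ⁅J x, y⁆ + J ⁅x, J y⁆ - ⁅J x, J y⁆ = 0 := by
  simp only [dite_eq_ite] at hbr
  have hbasis := lie_basis_eq_coord_smul_sub (by omega) e hbr
  exact nijenhuis_eq_zero_of_lie_eq_smul_sub_smul _ (lie_eq_smul_sub_smul_of_basis e _ hbasis) J hJ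
end
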